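/- arXiv:2207.05119 — 2 statements merged into one kernel-verified Lean document; each statement's English description precedes it below -/
import Mathlib

section
/- Multiplying a permutation w in S_n (on the left or right) by the permutation corresponding to a single run changes the length of a longest increasing subsequence of w by at most one. -/
/-- The simple transposition `s_i` in `S_n`, swapping positions `i` and `i+1`
(1-indexed, so valid for `1 ≤ i ≤ n-1`); otherwise the identity. -/
def simpleT (n : ℕ) (i : ℕ) : Equiv.Perm (Fin n) :=
  if h : 1 ≤ i ∧ i < n then Equiv.swap ⟨i - 1, by omega⟩ ⟨i, h.2⟩ else 1

/-- `l` is a word in the simple transpositions `s_1, …, s_{n-1}` with product `w`. -/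
def IsWord (n : ℕ) (w : Equiv.Perm (Fin n)) (l : List ℕ) : Prop :=
  (∀ i ∈ l, 1 ≤ i ∧ i < n) ∧ (l.map (simpleT n)).prod = w

/-- The Coxeter length of `w`. -/
noncomputable def coxLength (n : ℕ) (w : Equiv.Perm (Fin n)) : ℕ :=
  sInf {k | ∃ l, IsWord n w l ∧ l.length = k}

/-- A reduced word for `w`: a word of minimal length. -/
def IsReducedWord (n : ℕ) (w : Equiv.Perm (Fin n)) (l : List ℕ) : Prop :=
  IsWord n w l ∧ l.length = coxLength n w

/-- A run: a nonempty word of consecutive integers, increasing or decreasing. -/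
def IsRun (r : List ℕ) : Prop :=
  r ≠ [] ∧ (List.Chain' (fun a b => b = a + 1) r ∨ List.Chain' (fun a b => a = b + 1) r)

/-- `run(w)`: the minimum number of runs whose concatenation is a reduced word of `w`. -/
noncomputable def runStat (n : ℕ) (w : Equiv.Perm (Fin n)) : ℕ :=
  sInf {k | ∃ rs : List (List ℕ), rs.length = k ∧ (∀ r ∈ rs, IsRun r) ∧
    IsReducedWord n w rs.flatten}

/-- One-line notation of `w`, with entries `1, …, n`. -/
def oneLine {n : ℕ} (w : Equiv.Perm (Fin n)) : List ℕ :=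
  List.ofFn (fun i => (w i : ℕ) + 1)

/-- Length of a longest increasing subsequence of the one-line notation of `w`. -/
noncomputable def lisLen {n : ℕ} (w : Equiv.Perm (Fin n)) : ℕ :=
  sSup {k | ∃ l : List ℕ, l.Sublist (oneLine w) ∧ l.Pairwise (· < ·) ∧ l.length = k}

/-- Schensted row insertion: insert `x` into row `r`, possibly bumping an entry. -/
def rowInsert (r : List ℕ) (x : ℕ) : List ℕ × Option ℕ :=
  match r.findIdx? (fun y => decide (x < y)) with
  | none => (r ++ [x], none)
  | some i => (r.set i x, r[i]?)

/-- Schensted insertion of `x` into a tableau (list of rows). -/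
def bumpInsert : List (List ℕ) → ℕ → List (List ℕ)
  | [], x => [[x]]
  | r :: rest, x =>
    match rowInsert r x with
    | (r', none) => r' :: rest
    | (r', some y) => r' :: bumpInsert rest y

/-- The RSK insertion tableau of a word. -/
def Ptab (w : List ℕ) : List (List ℕ) := w.foldl bumpInsert []

/-- The index of the row where the new box appeared, going from `p` to `p'`. -/
def recRow (p p' : List (List ℕ)) : ℕ :=
  (List.range p'.length).findIdx
    (fun j => decide ((p.getD j []).length < (p'.getD j []).length))

/-- Add entry `v` at the end of row `j` of `q`. -/
def addAt (q : List (List ℕ)) (j v : ℕ) : List (List ℕ) :=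
  if j < q.length then q.set j ((q.getD j []) ++ [v]) else q ++ [[v]]

/-- The RSK recording tableau of a word. -/
def Qtab (w : List ℕ) : List (List ℕ) :=
  ((w.zipIdx.map Prod.swap).foldl (fun pq ix =>
    let p' := bumpInsert pq.1 ix.2
    (p', addAt pq.2 (recRow pq.1 p') (ix.1 + 1))) (([], []) : List (List ℕ) × List (List ℕ))).2

/-- The second row of a tableau. -/
def Row2 (t : List (List ℕ)) : List ℕ := t.getD 1 []

/-- A set `L` of integers is uncrowded if every interval `[y, y+2x]` contains
at most `x+1` elements of `L`. -/
def Uncrowded (L : Set ℤ) : Prop :=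
  ∀ (y : ℤ) (x : ℕ), 0 < x → ({z : ℤ | y ≤ z ∧ z ≤ y + 2 * (x : ℤ)} ∩ L).ncard ≤ x + 1

/-- `w` is boolean: some reduced word of `w` has all distinct letters. -/
def BooleanPerm (n : ℕ) (w : Equiv.Perm (Fin n)) : Prop :=
  ∃ l, IsReducedWord n w l ∧ l.Nodup

/-- `w` avoids the pattern `321`. -/
def Avoids321 {n : ℕ} (w : Equiv.Perm (Fin n)) : Prop :=
  ¬ ∃ i j k : Fin n, i < j ∧ j < k ∧ w k < w j ∧ w j < w i

/-- `w` avoids the pattern `3412`. -/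
def Avoids3412 {n : ℕ} (w : Equiv.Perm (Fin n)) : Prop :=
  ¬ ∃ i j k l : Fin n, i < j ∧ j < k ∧ k < l ∧ w k < w l ∧ w l < w i ∧ w i < w j

/-- The support of `w`: the letters appearing in reduced words of `w`. -/
def Supp (n : ℕ) (w : Equiv.Perm (Fin n)) : Set ℕ :=
  {i | ∃ l, IsReducedWord n w l ∧ i ∈ l}

/-- The entries of a row, as a set of integers. -/
def entrySet (r : List ℕ) : Set ℤ := {z | ∃ x ∈ r, (x : ℤ) = z}

/-- `(r1, r2)` are the rows of a standard Young tableau of size `n` with at most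
two rows (entries `1, …, n`). -/
def IsSYT2 (n : ℕ) (r1 r2 : List ℕ) : Prop :=
  r1.Pairwise (· < ·) ∧ r2.Pairwise (· < ·) ∧ r2.length ≤ r1.length ∧
  (∀ i < r2.length, r1.getD i 0 < r2.getD i 0) ∧
  (r1 ++ r2).Perm (List.range' 1 n)

/-- The tableau (list of nonempty rows) with rows `r1`, `r2`. -/
def tab2 (r1 r2 : List ℕ) : List (List ℕ) :=
  if r2 = [] then (if r1 = [] then [] else [r1]) else [r1, r2]

/-- Every maximal block of `1`s (`true`s) in the binary word has odd length. -/
def OddBlocks (l : List Bool) : Prop :=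
  ∀ l₁ l₂ l₃ : List Bool, l = l₁ ++ l₂ ++ l₃ → l₂ ≠ [] → (∀ b ∈ l₂, b = true) →
    l₁.getLast? ≠ some true → l₃.head? ≠ some true → Odd l₂.length

/-!
The permutation `ρ = s_a s_{a+1} ⋯ s_c` of a run is a cycle that is increasing on the
complement of a single point, so the one-line notation of `w * ρ` is that of `w` with one
entry moved elsewhere. An increasing subsequence of one of them, with that entry deleted,
is an increasing subsequence of the other. Left multiplication reduces to right
multiplication because `w` and `w⁻¹` have the same longest increasing subsequences.
-/

open Equiv List

section

variable {n : ℕ}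

section LongestIncreasing

lemma sublist_finRange_of_pairwise {l : List (Fin n)} (hl : l.Pairwise (· < ·)) :
    l <+ finRange n :=
  sublist_of_subperm_of_pairwise (subperm_of_subset hl.nodup fun i _ => mem_finRange i) hl
    (pairwise_lt_finRange n)

lemma pairwise_map_oneLine_iff (w : Perm (Fin n)) (l : List (Fin n)) :
    (l.map fun i => (w i : ℕ) + 1).Pairwise (· < ·) ↔ (l.map w).Pairwise (· < ·) := by
  simp only [pairwise_map, add_lt_add_iff_right, Fin.val_fin_lt]

lemma length_le_lisLen {w : Perm (Fin n)} {l : List (Fin n)} (hl : l.Pairwise (· < ·))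
    (hwl : (l.map w).Pairwise (· < ·)) : l.length ≤ lisLen w := by
  refine le_csSup ⟨n, ?_⟩ ⟨l.map fun i => (w i : ℕ) + 1, ?_, ?_, length_map _⟩
  · rintro k ⟨l', hl', -, rfl⟩
    simpa [oneLine] using hl'.length_le
  · rw [oneLine, ofFn_eq_map]
    exact (sublist_finRange_of_pairwise hl).map _
  · exact (pairwise_map_oneLine_iff w l).2 hwl

lemma exists_length_eq_lisLen (w : Perm (Fin n)) :
    ∃ l : List (Fin n), l.Pairwise (· < ·) ∧ (l.map w).Pairwise (· < ·) ∧
      l.length = lisLen w := by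
  have hmem := Nat.sSup_mem (s := {k | ∃ l : List ℕ, l <+ oneLine w ∧
      l.Pairwise (· < ·) ∧ l.length = k}) ⟨0, [], nil_sublist _, Pairwise.nil, rfl⟩
    ⟨n, by rintro k ⟨l', hl', -, rfl⟩; simpa [oneLine] using hl'.length_le⟩
  obtain ⟨l, hl, hinc, hlen⟩ := hmem
  rw [oneLine, ofFn_eq_map, sublist_map_iff] at hl
  obtain ⟨l', hl', rfl⟩ := hl
  exact ⟨l', (pairwise_lt_finRange n).sublist hl', (pairwise_map_oneLine_iff w l').1 hinc,
    by rwa [length_map] at hlen⟩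

lemma lisLen_inv_le (w : Perm (Fin n)) : lisLen w⁻¹ ≤ lisLen w := by
  obtain ⟨l, hl, hwl, hlen⟩ := exists_length_eq_lisLen w⁻¹
  rw [← hlen, ← length_map (f := ⇑w⁻¹)]
  exact length_le_lisLen hwl (by simpa [map_map] using hl)

lemma lisLen_inv (w : Perm (Fin n)) : lisLen w⁻¹ = lisLen w :=
  le_antisymm (lisLen_inv_le w) (by simpa using lisLen_inv_le w⁻¹)

end LongestIncreasing

section MonotoneOffAPoint

variable {σ : Perm (Fin n)} {j : Fin n}

lemma StrictMonoOn.perm_inv (hσ : StrictMonoOn σ {j}ᶜ) : StrictMonoOn ⇑σ⁻¹ {σ j}ᶜ := by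
  have hmem : ∀ a ∈ ({σ j}ᶜ : Set (Fin n)), σ⁻¹ a ∈ ({j}ᶜ : Set (Fin n)) := by
    intro a ha
    simpa [Perm.inv_def, symm_apply_eq] using ha
  intro a ha b hb hab
  rw [← hσ.lt_iff_lt (hmem a ha) (hmem b hb)]
  simpa using hab

lemma lisLen_mul_le_add_one (w : Perm (Fin n)) (hσ : StrictMonoOn σ {j}ᶜ) :
    lisLen (w * σ) ≤ lisLen w + 1 := by
  obtain ⟨l, hl, hwl, hlen⟩ := exists_length_eq_lisLen (w * σ)
  have hl' : (l.erase j).Pairwise (· < ·) := hl.sublist erase_sublist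
  have hne : ∀ i ∈ l.erase j, i ∈ ({j}ᶜ : Set (Fin n)) := fun i hi hij =>
    hl.nodup.not_mem_erase (hij ▸ hi)
  have hσl : ((l.erase j).map σ).Pairwise (· < ·) :=
    pairwise_map.2 (hl'.imp_of_mem fun ha hb hab => hσ (hne _ ha) (hne _ hb) hab)
  have hwσl : (((l.erase j).map σ).map w).Pairwise (· < ·) := by
    rw [map_map, ← Perm.coe_mul]
    exact hwl.sublist (erase_sublist.map _)
  have hlen' : l.length ≤ (l.erase j).length + 1 := by
    rw [length_erase]
    split_ifs <;> omega
  calc lisLen (w * σ) = l.length := hlen.symm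
    _ ≤ (l.erase j).length + 1 := hlen'
    _ ≤ lisLen w + 1 := by simpa using length_le_lisLen hσl hwσl

lemma lisLen_le_mul_add_one (w : Perm (Fin n)) (hσ : StrictMonoOn σ {j}ᶜ) :
    lisLen w ≤ lisLen (w * σ) + 1 := by
  simpa using lisLen_mul_le_add_one (w * σ) hσ.perm_inv

lemma lisLen_mul_left_le_add_one (w : Perm (Fin n)) (hσ : StrictMonoOn σ {j}ᶜ) :
    lisLen (σ * w) ≤ lisLen w + 1 := by
  simpa [← mul_inv_rev, lisLen_inv] using lisLen_mul_le_add_one w⁻¹ hσ.perm_inv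

lemma lisLen_le_mul_left_add_one (w : Perm (Fin n)) (hσ : StrictMonoOn σ {j}ᶜ) :
    lisLen w ≤ lisLen (σ * w) + 1 := by
  simpa using lisLen_mul_left_le_add_one (σ * w) hσ.perm_inv

end MonotoneOffAPoint

section Runs

lemma val_simpleT_apply {k : ℕ} (hk1 : 1 ≤ k) (hkn : k < n) (p : Fin n) :
    (simpleT n k p : ℕ) = if (p : ℕ) = k - 1 then k else if (p : ℕ) = k then k - 1 else p := by
  simp only [simpleT, dif_pos (And.intro hk1 hkn), swap_apply_def, Fin.ext_iff]
  split_ifs <;> simp_all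

lemma StrictMonoOn.simpleT_mul {f : Perm (Fin n)} {j : Fin n} (hf : StrictMonoOn f {j}ᶜ)
    {k : ℕ} (hk : (f j : ℕ) + 1 = k ∨ (f j : ℕ) = k) : StrictMonoOn ⇑(simpleT n k * f) {j}ᶜ := by
  -- `f` misses the value `f j ∈ {k - 1, k}` off `j`, so the swap of `k - 1` and `k` is
  -- monotone on the rest of the range of `f`.
  by_cases hkn : 1 ≤ k ∧ k < n
  · intro x hx y hy hxy
    have hfxy : (f x : ℕ) < f y := hf hx hy hxy
    have hfx : (f x : ℕ) ≠ f j := Fin.val_injective.ne (f.injective.ne hx)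
    have hfy : (f y : ℕ) ≠ f j := Fin.val_injective.ne (f.injective.ne hy)
    rw [Perm.mul_apply, Perm.mul_apply, Fin.lt_def, val_simpleT_apply hkn.1 hkn.2,
      val_simpleT_apply hkn.1 hkn.2]
    split_ifs <;> omega
  · simpa [simpleT, hkn] using hf

lemma exists_strictMonoOn_prod_of_isChain_succ {b : ℕ} {rest : List ℕ}
    (hchain : (b :: rest).IsChain (fun a b => b = a + 1)) (hv : ∀ i ∈ b :: rest, 1 ≤ i ∧ i < n) :
    ∃ j : Fin n, StrictMonoOn ⇑((b :: rest).map (simpleT n)).prod {j}ᶜ ∧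
      (((b :: rest).map (simpleT n)).prod j : ℕ) + 1 = b := by
  obtain ⟨hb1, hbn⟩ := hv b mem_cons_self
  induction rest generalizing b with
  | nil =>
    have hid : StrictMonoOn ⇑(1 : Perm (Fin n)) {⟨b, hbn⟩}ᶜ := fun _ _ _ _ h => h
    refine ⟨⟨b, hbn⟩, by simpa using hid.simpleT_mul (Or.inr rfl), ?_⟩
    simp only [map_cons, map_nil, prod_singleton, val_simpleT_apply hb1 hbn]
    split_ifs <;> omega
  | cons c rest ih =>
    obtain ⟨rfl, htail⟩ := isChain_cons_cons.1 hchain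
    obtain ⟨j, hj, hjc⟩ := ih htail (fun i hi => hv i (mem_cons_of_mem _ hi)) (by omega)
      (hv _ (mem_cons_of_mem _ mem_cons_self)).2
    refine ⟨j, ?_, ?_⟩
    · rw [map_cons, prod_cons]
      exact hj.simpleT_mul (Or.inr (by omega))
    · rw [map_cons, prod_cons, Perm.mul_apply, val_simpleT_apply hb1 hbn]
      split_ifs <;> omega

lemma exists_strictMonoOn_prod_of_isChain_pred {b : ℕ} {rest : List ℕ}
    (hchain : (b :: rest).IsChain (fun a b => a = b + 1)) (hv : ∀ i ∈ b :: rest, 1 ≤ i ∧ i < n) :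
    ∃ j : Fin n, StrictMonoOn ⇑((b :: rest).map (simpleT n)).prod {j}ᶜ ∧
      (((b :: rest).map (simpleT n)).prod j : ℕ) = b := by
  obtain ⟨hb1, hbn⟩ := hv b mem_cons_self
  induction rest generalizing b with
  | nil =>
    have hid : StrictMonoOn ⇑(1 : Perm (Fin n)) {⟨b - 1, by omega⟩}ᶜ := fun _ _ _ _ h => h
    refine ⟨⟨b - 1, by omega⟩, ?_, ?_⟩
    · simpa using hid.simpleT_mul (Or.inl (show b - 1 + 1 = b by omega))
    · simp only [map_cons, map_nil, prod_singleton, val_simpleT_apply hb1 hbn]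
      split_ifs <;> omega
  | cons c rest ih =>
    obtain ⟨rfl, htail⟩ := isChain_cons_cons.1 hchain
    obtain ⟨j, hj, hjc⟩ := ih htail (fun i hi => hv i (mem_cons_of_mem _ hi))
      (hv _ (mem_cons_of_mem _ mem_cons_self)).1 (by omega)
    refine ⟨j, ?_, ?_⟩
    · rw [map_cons, prod_cons]
      exact hj.simpleT_mul (Or.inl (by omega))
    · rw [map_cons, prod_cons, Perm.mul_apply, val_simpleT_apply hb1 hbn]
      split_ifs <;> omega

lemma IsRun.exists_strictMonoOn_prod {r : List ℕ} (hr : IsRun r) (hv : ∀ i ∈ r, 1 ≤ i ∧ i < n) :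
    ∃ j : Fin n, StrictMonoOn ⇑(r.map (simpleT n)).prod {j}ᶜ := by
  obtain ⟨hne, hinc | hdec⟩ := hr
  all_goals obtain ⟨b, rest, rfl⟩ := exists_cons_of_ne_nil hne
  · obtain ⟨j, hj, -⟩ := exists_strictMonoOn_prod_of_isChain_succ hinc hv
    exact ⟨j, hj⟩
  · obtain ⟨j, hj, -⟩ := exists_strictMonoOn_prod_of_isChain_pred hdec hv
    exact ⟨j, hj⟩

end Runs

end

theorem stmt2 (n : ℕ) (w : Equiv.Perm (Fin n)) (r : List ℕ)
    (hr : IsRun r) (hv : ∀ i ∈ r, 1 ≤ i ∧ i < n) :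
    (lisLen (w * (r.map (simpleT n)).prod) ≤ lisLen w + 1 ∧
      lisLen w ≤ lisLen (w * (r.map (simpleT n)).prod) + 1) ∧
    (lisLen ((r.map (simpleT n)).prod * w) ≤ lisLen w + 1 ∧
      lisLen w ≤ lisLen ((r.map (simpleT n)).prod * w) + 1) := by
  obtain ⟨j, hj⟩ := hr.exists_strictMonoOn_prod hv
  exact ⟨⟨lisLen_mul_le_add_one w hj, lisLen_le_mul_add_one w hj⟩,
    ⟨lisLen_mul_left_le_add_one w hj, lisLen_le_mul_left_add_one w hj⟩⟩
end

section
/- The minimum number of runs whose concatenation is a (not necessarily reduced) decomposition for a permutation w in S_n equals run(w), the minimum number of runs whose concatenation is a reduced word for w. -/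
/-!
Encode an increasing subsequence of `w` as a set of positions on which `w` is strictly monotone,
and let `L` be the largest size of one. The product of a run is a cycle `Fin.cycleIcc i j` or its
inverse, which is strictly monotone off a single point; so multiplying by a run lowers `L` by at
most one, and every word for `w` made of `k` runs, reduced or not, has `n ≤ L + k`.

Conversely, by induction on the number of inversions, `w` has a word of length `invCount w`
(hence reduced, since `invCount` grows by at most one per letter) made of at most `n - L` runs:
the largest entry `m` out of place is brought to position `m` by one run, multiplying on the
right if its position avoids a longest increasing subsequence, and otherwise doing the same for
`w⁻¹`. Both minima are therefore `n - L`.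
-/

open Equiv

theorem StrictMonoOn.perm_inv_s4 {α : Type*} [LinearOrder α] {σ : Perm α} {p : α}
    (h : StrictMonoOn σ {p}ᶜ) : StrictMonoOn ⇑σ⁻¹ {σ p}ᶜ := by
  intro x hx y hy hxy
  have hx' : σ⁻¹ x ∈ ({p}ᶜ : Set α) := fun hc => hx (by rw [← hc]; simp)
  have hy' : σ⁻¹ y ∈ ({p}ᶜ : Set α) := fun hc => hy (by rw [← hc]; simp)
  rwa [← h.lt_iff_lt hx' hy', Perm.coe_inv, apply_symm_apply, apply_symm_apply]

theorem StrictMonoOn.perm_inv_image {α : Type*} [LinearOrder α] {σ : Perm α} {S : Set α}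
    (h : StrictMonoOn σ S) : StrictMonoOn ⇑σ⁻¹ (σ '' S) := by
  rintro _ ⟨a, ha, rfl⟩ _ ⟨b, hb, rfl⟩ hab
  simpa using (h.lt_iff_lt ha hb).mp hab

theorem StrictMonoOn.perm_mul {α : Type*} [Preorder α] {c u : Perm α} {p : α} {S : Set α}
    (hc : StrictMonoOn c {p}ᶜ) (hu : StrictMonoOn u S) : StrictMonoOn ⇑(c * u) (S \ {u⁻¹ p}) := by
  refine hc.comp (hu.mono Set.sdiff_subset) fun x hx hpx => hx.2 ?_
  simp [← Set.mem_singleton_iff.mp hpx]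

theorem Equiv.Perm.apply_le_of_forall_lt_apply_eq {α : Type*} [LinearOrder α] {σ : Perm α}
    {m x : α} (hfix : ∀ i, m < i → σ i = i) (hx : x ≤ m) : σ x ≤ m := by
  by_contra h
  rw [σ.injective (hfix _ (lt_of_not_ge h))] at h
  exact h hx

theorem Equiv.Perm.apply_lt_of_forall_le_apply_eq {α : Type*} [LinearOrder α] {σ : Perm α}
    {m x : α} (hfix : ∀ i, m ≤ i → σ i = i) (hx : x < m) : σ x < m := by
  by_contra h
  rw [σ.injective (hfix _ (le_of_not_gt h))] at h
  exact h hx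

theorem StrictMonoOn.insert_of_forall_le_apply_eq {α : Type*} [LinearOrder α] {σ : Perm α}
    {m : α} {T : Set α} (hfix : ∀ i, m ≤ i → σ i = i) (h : StrictMonoOn σ T) :
    StrictMonoOn σ (insert m T) := by
  refine strictMonoOn_insert_iff.mpr ⟨fun b _ hb => ?_, fun b _ hb => ?_, h⟩
  · rw [hfix m le_rfl]
    exact σ.apply_lt_of_forall_le_apply_eq hfix hb
  · rwa [hfix m le_rfl, hfix b hb.le]

theorem Equiv.Perm.inv_apply_lt_of_forall_lt_apply_eq {α : Type*} [LinearOrder α] {σ : Perm α}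
    {m : α} (hfix : ∀ i, m < i → σ i = i) (hm : σ m ≠ m) : σ⁻¹ m < m := by
  have hfix' : ∀ i, m < i → σ⁻¹ i = i := fun i hi => Perm.inv_eq_iff_eq.mpr (hfix i hi).symm
  refine lt_of_le_of_ne (σ⁻¹.apply_le_of_forall_lt_apply_eq hfix' le_rfl) fun h => hm ?_
  conv_lhs => rw [← h]
  simp

theorem Equiv.Perm.exists_forall_lt_apply_eq {α : Type*} [Fintype α] [LinearOrder α]
    {σ : Perm α} (hσ : σ ≠ 1) : ∃ m, σ m ≠ m ∧ ∀ i, m < i → σ i = i := by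
  classical
  have hne : (Finset.univ.filter fun i => σ i ≠ i).Nonempty := by
    obtain ⟨i, hi⟩ := not_forall.mp (mt Perm.ext hσ)
    exact ⟨i, by simpa using hi⟩
  refine ⟨_, (Finset.mem_filter.mp (Finset.max'_mem _ hne)).2, fun i hi => ?_⟩
  by_contra h
  exact (Finset.le_max' _ i (by simpa using h)).not_gt hi

section

variable {n : ℕ}

theorem Fin.val_cycleIcc {i j : Fin n} (hij : i ≤ j) (k : Fin n) :
    (Fin.cycleIcc i j k : ℕ) =
      if k < i ∨ j < k then (k : ℕ) else if k = j then (i : ℕ) else (k : ℕ) + 1 := by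
  have : NeZero n := ⟨by omega⟩
  split_ifs with h₁ h₂
  · rcases h₁ with h | h
    · rw [Fin.cycleIcc_of_lt h]
    · rw [Fin.cycleIcc_of_gt h]
  · rw [h₂, Fin.cycleIcc_of_last hij]
  · simp only [not_or, not_lt] at h₁
    have hkj : k < j := lt_of_le_of_ne h₁.2 h₂
    rw [Fin.cycleIcc_of_ge_of_lt h₁.1 hkj, Fin.val_add, Fin.val_one', Nat.add_mod_mod,
      Nat.mod_eq_of_lt (by omega)]

theorem Fin.strictMonoOn_cycleIcc (i j : Fin n) : StrictMonoOn (Fin.cycleIcc i j) {j}ᶜ := by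
  by_cases hij : i ≤ j
  · intro x hx y hy hxy
    simp only [Set.mem_compl_iff, Set.mem_singleton_iff] at hx hy
    rw [Fin.lt_def, Fin.val_cycleIcc hij, Fin.val_cycleIcc hij]
    rw [Fin.lt_def] at hxy
    have := Fin.val_ne_of_ne hx
    have := Fin.val_ne_of_ne hy
    split_ifs <;> simp only [Fin.lt_def] at * <;> omega
  · simp [Fin.cycleIcc, hij, strictMono_id.strictMonoOn]

theorem simpleT_succ (i : Fin n) (h : (i : ℕ) + 1 < n) :
    simpleT n (i + 1) = swap i ⟨i + 1, h⟩ := by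
  simp [simpleT, h]

theorem simpleT_mul_self (i : ℕ) : simpleT n i * simpleT n i = 1 := by
  unfold simpleT
  split_ifs <;> simp

def wordProd (n : ℕ) (l : List ℕ) : Perm (Fin n) := (l.map (simpleT n)).prod

@[simp]
theorem wordProd_nil : wordProd n [] = 1 := rfl

@[simp]
theorem wordProd_cons (a : ℕ) (l : List ℕ) :
    wordProd n (a :: l) = simpleT n a * wordProd n l := by
  simp [wordProd]

@[simp]
theorem wordProd_append (l₁ l₂ : List ℕ) :
    wordProd n (l₁ ++ l₂) = wordProd n l₁ * wordProd n l₂ := by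
  simp [wordProd]

theorem wordProd_reverse (l : List ℕ) : wordProd n l.reverse = (wordProd n l)⁻¹ := by
  induction l with
  | nil => simp
  | cons a l ih =>
    rw [List.reverse_cons, wordProd_append, ih, wordProd_cons, wordProd_cons, wordProd_nil,
      mul_one, mul_inv_rev, inv_eq_of_mul_eq_one_right (simpleT_mul_self a)]

theorem Fin.swap_mul_cycleIcc {i i' j : Fin n} (hi' : (i' : ℕ) = i + 1) (hij : i < j) :
    swap i i' * Fin.cycleIcc i' j = Fin.cycleIcc i j := by
  ext k
  have hi'j : i' ≤ j := Fin.le_def.mpr (by have := Fin.lt_def.mp hij; omega)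
  have hx := Fin.val_cycleIcc hi'j k
  rw [Perm.mul_apply, Fin.val_cycleIcc hij.le, swap_apply_def]
  generalize Fin.cycleIcc i' j k = x at hx ⊢
  simp only [Fin.ext_iff, Fin.lt_def] at hx hij ⊢
  split_ifs at hx ⊢ <;> omega

theorem wordProd_range' (k : ℕ) (i : Fin n) (h : (i : ℕ) + k < n) :
    wordProd n (List.range' (i + 1) k) = Fin.cycleIcc i ⟨i + k, h⟩ := by
  induction k generalizing i with
  | zero =>
    have : NeZero n := ⟨by omega⟩
    rw [List.range'_zero, wordProd_nil, show (⟨i + 0, h⟩ : Fin n) = i from Fin.ext rfl,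
      Fin.cycleIcc_eq]
  | succ k ih =>
    rw [List.range'_succ, wordProd_cons, simpleT_succ i (by omega),
      ih ⟨i + 1, by omega⟩ (by simp only; omega)]
    convert Fin.swap_mul_cycleIcc (i := i) (i' := ⟨i + 1, by omega⟩) (j := ⟨i + (k + 1), h⟩) rfl
      (by simp [Fin.lt_def]) using 3
    simp only [Fin.mk.injEq]
    omega

theorem eq_range'_of_isChain :
    ∀ l : List ℕ, l.IsChain (fun a b => b = a + 1) → l = List.range' (l.headD 0) l.length
  | [], _ => rfl
  | [a], _ => rfl
  | a :: b :: l, h => by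
    rw [List.isChain_cons_cons] at h
    have ih := eq_range'_of_isChain (b :: l) h.2
    rw [List.headD_cons] at ih
    rw [List.headD_cons, List.length_cons, List.range'_succ, ← h.1, ← ih]

theorem isRun_range' (a : ℕ) {k : ℕ} (hk : k ≠ 0) : IsRun (List.range' a k) :=
  ⟨by simpa using hk, Or.inl (List.isChain_range' a k 1)⟩

theorem IsRun.reverse {r : List ℕ} (hr : IsRun r) : IsRun r.reverse := by
  obtain ⟨hne, hch | hch⟩ := hr
  · exact ⟨by simpa using hne, Or.inr (List.isChain_reverse.mpr hch)⟩
  · exact ⟨by simpa using hne, Or.inl (List.isChain_reverse.mpr hch)⟩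

theorem wordProd_eq_cycleIcc_of_isChain {r : List ℕ} (hne : r ≠ [])
    (hch : r.IsChain (fun a b => b = a + 1)) (hv : ∀ a ∈ r, 1 ≤ a ∧ a < n) :
    ∃ i j : Fin n, wordProd n r = Fin.cycleIcc i j := by
  have hr := eq_range'_of_isChain r hch
  set a := r.headD 0
  have hk : r.length ≠ 0 := by simpa using hne
  have ha : 1 ≤ a := (hv a (by rw [hr]; simp; omega)).1
  have hak : a + r.length - 1 < n := (hv _ (by rw [hr]; simp; omega)).2
  refine ⟨⟨a - 1, by omega⟩, ⟨a - 1 + r.length, by omega⟩, ?_⟩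
  conv_lhs => rw [hr]
  rw [← wordProd_range' r.length ⟨a - 1, by omega⟩ (by simp only; omega)]
  congr 2
  simp only
  omega

theorem IsRun.exists_wordProd_eq {r : List ℕ} (hr : IsRun r) (hv : ∀ a ∈ r, 1 ≤ a ∧ a < n) :
    ∃ i j : Fin n, wordProd n r = Fin.cycleIcc i j ∨ wordProd n r = (Fin.cycleIcc i j)⁻¹ := by
  obtain ⟨hne, hch | hch⟩ := hr
  · obtain ⟨i, j, h⟩ := wordProd_eq_cycleIcc_of_isChain hne hch hv
    exact ⟨i, j, Or.inl h⟩
  · obtain ⟨i, j, h⟩ := wordProd_eq_cycleIcc_of_isChain (by simpa using hne)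
      (List.isChain_reverse.mpr hch) (by simpa using hv)
    refine ⟨i, j, Or.inr ?_⟩
    rw [← h, wordProd_reverse, inv_inv]

theorem IsRun.exists_strictMonoOn {r : List ℕ} (hr : IsRun r) (hv : ∀ a ∈ r, 1 ≤ a ∧ a < n) :
    ∃ p, StrictMonoOn (wordProd n r) {p}ᶜ := by
  obtain ⟨i, j, h | h⟩ := hr.exists_wordProd_eq hv
  · exact ⟨j, h ▸ Fin.strictMonoOn_cycleIcc i j⟩
  · exact ⟨Fin.cycleIcc i j j, h ▸ (Fin.strictMonoOn_cycleIcc i j).perm_inv_s4⟩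

theorem exists_strictMonoOn_card_add_length {rs : List (List ℕ)} (hrs : ∀ r ∈ rs, IsRun r)
    (hv : ∀ a ∈ rs.flatten, 1 ≤ a ∧ a < n) :
    ∃ S : Finset (Fin n), StrictMonoOn (wordProd n rs.flatten) S ∧ n ≤ S.card + rs.length := by
  induction rs with
  | nil => exact ⟨Finset.univ, strictMono_id.strictMonoOn _, by simp⟩
  | cons r rs ih =>
    simp only [List.flatten_cons, List.mem_append, List.mem_cons, forall_eq_or_imp] at hv hrs ⊢
    obtain ⟨S, hS, hcard⟩ := ih hrs.2 fun a ha => hv a (Or.inr ha)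
    obtain ⟨p, hp⟩ := hrs.1.exists_strictMonoOn fun a ha => hv a (Or.inl ha)
    refine ⟨S.erase ((wordProd n rs.flatten)⁻¹ p), ?_, ?_⟩
    · rw [Finset.coe_erase, wordProd_append]
      exact hp.perm_mul hS
    · have := S.pred_card_le_card_erase (a := (wordProd n rs.flatten)⁻¹ p)
      simp only [List.length_cons]
      omega

def invSet (w : Perm (Fin n)) : Finset (Fin n × Fin n) :=
  Finset.univ.filter fun p => p.1 < p.2 ∧ w p.2 < w p.1

def invCount (w : Perm (Fin n)) : ℕ := (invSet w).card

@[simp]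
theorem mem_invSet {w : Perm (Fin n)} {p : Fin n × Fin n} :
    p ∈ invSet w ↔ p.1 < p.2 ∧ w p.2 < w p.1 := by
  simp [invSet]

theorem invCount_inv_le (w : Perm (Fin n)) : invCount w⁻¹ ≤ invCount w := by
  refine Finset.card_le_card_of_injOn (fun p => (w⁻¹ p.2, w⁻¹ p.1)) ?_ ?_
  · rintro ⟨p, q⟩ h
    simp only [Finset.mem_coe, mem_invSet] at h ⊢
    simpa using h.symm
  · rintro ⟨p, q⟩ - ⟨p', q'⟩ - h
    simp only [Prod.mk.injEq, EmbeddingLike.apply_eq_iff_eq] at h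
    simp [h]

@[simp]
theorem invCount_inv (w : Perm (Fin n)) : invCount w⁻¹ = invCount w :=
  le_antisymm (invCount_inv_le w) (by simpa using invCount_inv_le w⁻¹)

theorem swap_lt_swap {a b p q : Fin n} (hab : (b : ℕ) = a + 1) (hpq : p < q)
    (hne : (p, q) ≠ (a, b)) : swap a b p < swap a b q := by
  simp only [ne_eq, Prod.mk.injEq, Fin.ext_iff] at hne
  rw [Fin.lt_def] at hpq ⊢
  rw [swap_apply_def, swap_apply_def]
  split_ifs <;> simp only [Fin.ext_iff] at * <;> omega

theorem invCount_mul_simpleT_le (w : Perm (Fin n)) (i : ℕ) :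
    invCount (w * simpleT n i) ≤ invCount w + 1 := by
  by_cases hi : 1 ≤ i ∧ i < n
  · set a : Fin n := ⟨i - 1, by omega⟩
    set b : Fin n := ⟨i, hi.2⟩
    have hs : simpleT n i = swap a b := by simp [simpleT, hi, a, b]
    have hab : (b : ℕ) = a + 1 := by simp only [a, b]; omega
    have hle : ((invSet (w * simpleT n i)).erase (a, b)).card ≤ invCount w := by
      refine Finset.card_le_card_of_injOn (fun p => (swap a b p.1, swap a b p.2)) ?_ ?_
      · rintro ⟨p, q⟩ h
        simp only [Finset.coe_erase, Set.mem_sdiff, Set.mem_singleton_iff, Finset.mem_coe,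
          mem_invSet, hs, Perm.mul_apply] at h ⊢
        exact ⟨swap_lt_swap hab h.1.1 h.2, h.1.2⟩
      · rintro ⟨p, q⟩ - ⟨p', q'⟩ - h
        simp_all
    have := Finset.pred_card_le_card_erase (s := invSet (w * simpleT n i)) (a := (a, b))
    rw [invCount]
    omega
  · simp [simpleT, hi]

theorem invCount_wordProd_le_length (l : List ℕ) : invCount (wordProd n l) ≤ l.length := by
  induction l using List.reverseRecOn with
  | nil =>
    refine (Finset.card_eq_zero.mpr ?_).le
    exact Finset.filter_eq_empty_iff.mpr fun p _ h => lt_asymm h.1 h.2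
  | append_singleton l a ih =>
    rw [wordProd_append, wordProd_cons, wordProd_nil, mul_one, List.length_append,
      List.length_singleton]
    exact (invCount_mul_simpleT_le _ a).trans (by omega)

theorem isReducedWord_of_length_le_invCount {w : Perm (Fin n)} {l : List ℕ}
    (hw : IsWord n w l) (hl : l.length ≤ invCount w) : IsReducedWord n w l := by
  refine ⟨hw, le_antisymm ?_ (Nat.sInf_le ⟨l, hw, rfl⟩)⟩
  refine le_csInf ⟨_, l, hw, rfl⟩ ?_
  rintro k ⟨l', hl', rfl⟩
  exact hl.trans (hl'.2 ▸ invCount_wordProd_le_length l')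

theorem mul_cycleIcc_apply_of_le {w : Perm (Fin n)} {j m : Fin n} (hfix : ∀ i, m < i → w i = i)
    (hj : w j = m) (hjm : j ≤ m) : ∀ i, m ≤ i → (w * Fin.cycleIcc j m) i = i := by
  have : NeZero n := ⟨by omega⟩
  intro i hi
  rcases hi.eq_or_lt with rfl | hi
  · rw [Perm.mul_apply, Fin.cycleIcc_of_last hjm, hj]
  · rw [Perm.mul_apply, Fin.cycleIcc_of_gt hi, hfix i hi]

/-- Right multiplication by the cycle `(j j+1 … m)` moves the entry `m` of `w` from position `j`
to position `m`, removing the `m - j` inversions `(j, q)`, `j < q ≤ m`. -/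
theorem invCount_mul_cycleIcc_add_le {w : Perm (Fin n)} {j m : Fin n}
    (hfix : ∀ i, m < i → w i = i) (hj : w j = m) (hjm : j ≤ m) :
    invCount (w * Fin.cycleIcc j m) + (m - j : ℕ) ≤ invCount w := by
  set c := Fin.cycleIcc j m
  have hw'fix := mul_cycleIcc_apply_of_le hfix hj hjm
  have hcm : c m = j := by
    have : NeZero n := ⟨by omega⟩
    exact Fin.cycleIcc_of_last hjm
  have hmoved : invCount (w * c) ≤ ((invSet w).filter fun p => ¬p.1 = j).card := by
    refine Finset.card_le_card_of_injOn (fun p => (c p.1, c p.2)) ?_ ?_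
    · rintro ⟨p, q⟩ h
      simp only [Finset.mem_coe, mem_invSet, Finset.mem_filter] at h ⊢
      obtain ⟨hpq, hinv⟩ := h
      have hq : q < m := by
        by_contra hq
        rw [hw'fix q (not_lt.mp hq)] at hinv
        rcases lt_or_ge p m with hp | hp
        · exact hq (hinv.trans ((w * c).apply_lt_of_forall_le_apply_eq hw'fix hp))
        · rw [hw'fix p hp] at hinv
          exact lt_asymm hpq hinv
      have hp : p ≠ m := (hpq.trans hq).ne
      refine ⟨⟨(Fin.strictMonoOn_cycleIcc j m) hp hq.ne hpq, hinv⟩, fun h => hp ?_⟩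
      exact c.injective (h.trans hcm.symm)
    · rintro ⟨p, q⟩ - ⟨p', q'⟩ - h
      simp_all
  have hfixed : (m - j : ℕ) ≤ ((invSet w).filter fun p => p.1 = j).card := by
    rw [← Fin.card_Ioc]
    refine Finset.card_le_card_of_injOn (fun q => (j, q)) ?_ (fun q _ q' _ h => by simp_all)
    intro q hq
    simp only [Finset.coe_Ioc, Set.mem_Ioc] at hq
    simp only [Finset.mem_coe, Finset.mem_filter, mem_invSet, hj, and_true]
    refine ⟨hq.1, lt_of_le_of_ne (w.apply_le_of_forall_lt_apply_eq hfix hq.2) fun h => ?_⟩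
    exact hq.1.ne' (w.injective (h.trans hj.symm))
  have : _ = invCount w := Finset.card_filter_add_card_filter_not (s := invSet w) (·.1 = j)
  omega

def IsTightRunFactorization (w : Perm (Fin n)) (rs : List (List ℕ)) : Prop :=
  (∀ r ∈ rs, IsRun r) ∧ IsWord n w rs.flatten ∧ rs.flatten.length ≤ invCount w ∧
    ∀ S : Finset (Fin n), StrictMonoOn w S → rs.length + S.card ≤ n

theorem IsTightRunFactorization.inv {w : Perm (Fin n)} {rs : List (List ℕ)}
    (h : IsTightRunFactorization w rs) :
    IsTightRunFactorization w⁻¹ (rs.map List.reverse).reverse := by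
  obtain ⟨hruns, ⟨hv, hw⟩, hlen, hbound⟩ := h
  refine ⟨?_, ⟨?_, ?_⟩, ?_, fun S hS => ?_⟩
  · simp only [List.mem_reverse, List.mem_map]
    rintro _ ⟨r, hr, rfl⟩
    exact (hruns r hr).reverse
  · simpa [← List.reverse_flatten] using hv
  · rw [← List.reverse_flatten]
    exact (wordProd_reverse _).trans (congrArg _ hw)
  · simpa [← List.reverse_flatten] using hlen
  · have hS' : StrictMonoOn w ↑(S.image ⇑w⁻¹) := by
      simpa [Finset.coe_image] using hS.perm_inv_image
    have := hbound _ hS'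
    rwa [Finset.card_image_of_injective _ w⁻¹.injective, ← List.length_map List.reverse,
      ← List.length_reverse] at this

theorem IsTightRunFactorization.of_mul_cycleIcc {w : Perm (Fin n)} {j m : Fin n}
    (hfix : ∀ i, m < i → w i = i) (hj : w j = m) (hjm : j < m) {S₁ : Finset (Fin n)}
    (hS₁ : StrictMonoOn w S₁) (hmax : ∀ S : Finset (Fin n), StrictMonoOn w S → S.card ≤ S₁.card)
    (hjS : j ∉ S₁) {rs : List (List ℕ)}
    (h : IsTightRunFactorization (w * Fin.cycleIcc j m) rs) :
    IsTightRunFactorization w (rs ++ [(List.range' (j + 1) (m - j)).reverse]) := by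
  obtain ⟨hruns, ⟨hv, hw⟩, hlen, hbound⟩ := h
  set c := Fin.cycleIcc j m
  have hjm' : (j : ℕ) < m := hjm
  have hc : wordProd n (List.range' (j + 1) (m - j)) = c := by
    rw [wordProd_range' _ j (by omega)]
    exact congrArg _ (Fin.ext (Nat.add_sub_cancel' hjm'.le))
  refine ⟨?_, ⟨?_, ?_⟩, ?_, fun S hS => ?_⟩
  · simp only [List.mem_append, List.mem_singleton]
    rintro r (hr | rfl)
    · exact hruns r hr
    · exact (isRun_range' _ (by omega)).reverse
  · simp only [List.flatten_append, List.flatten_singleton, List.mem_append, List.mem_reverse,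
      List.mem_range'_1]
    rintro a (ha | ha)
    · exact hv a ha
    · omega
  · change wordProd n _ = w
    rw [List.flatten_append, List.flatten_singleton, wordProd_append, wordProd_reverse, hc]
    exact (congrArg (· * c⁻¹) hw).trans (mul_inv_cancel_right w c)
  · have : invCount (w * c) + _ ≤ _ := invCount_mul_cycleIcc_add_le hfix hj hjm.le
    simp only [List.flatten_append, List.flatten_singleton, List.length_append,
      List.length_reverse, List.length_range']
    omega
  · have hcm : c m = j := by
      have : NeZero n := ⟨by omega⟩
      exact Fin.cycleIcc_of_last hjm.le
    have hcinv : StrictMonoOn ⇑c⁻¹ S₁ :=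
      (hcm ▸ (Fin.strictMonoOn_cycleIcc j m).perm_inv_s4).mono fun a ha h => hjS (h ▸ ha)
    have hS₁' : StrictMonoOn ⇑(w * c) ↑(insert m (S₁.image ⇑c⁻¹)) := by
      rw [Finset.coe_insert, Finset.coe_image]
      refine StrictMonoOn.insert_of_forall_le_apply_eq (mul_cycleIcc_apply_of_le hfix hj hjm.le) ?_
      refine hS₁.comp (by simpa using hcinv.perm_inv_image) ?_
      rintro _ ⟨a, ha, rfl⟩
      simpa using ha
    have hm : m ∉ S₁.image ⇑c⁻¹ := by
      simp only [Finset.mem_image, not_exists, not_and]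
      intro a ha hac
      exact hjS (by rw [← hcm, ← hac]; simpa using ha)
    have := hbound _ hS₁'
    rw [Finset.card_insert_of_notMem hm, Finset.card_image_of_injective _ c⁻¹.injective] at this
    have := hmax S hS
    simp only [List.length_append, List.length_singleton]
    omega

theorem exists_isTightRunFactorization (w : Perm (Fin n)) :
    ∃ rs, IsTightRunFactorization w rs := by
  classical
  induction hk : invCount w using Nat.strong_induction_on generalizing w with
  | _ k ih =>
  by_cases hw : w = 1
  · subst hw
    exact ⟨[], by simp, ⟨by simp, rfl⟩, by simp, fun S _ => by simpa using S.card_le_univ⟩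
  obtain ⟨m, hm, hfix⟩ := w.exists_forall_lt_apply_eq hw
  have step : ∀ σ : Perm (Fin n), invCount σ = k → (∀ i, m < i → σ i = i) → σ m ≠ m →
      ∀ S₁ : Finset (Fin n), StrictMonoOn σ S₁ →
      (∀ S : Finset (Fin n), StrictMonoOn σ S → S.card ≤ S₁.card) → σ⁻¹ m ∉ S₁ →
      ∃ rs, IsTightRunFactorization σ rs := by
    intro σ hσk hσfix hσm S₁ hS₁ hmax hjS
    have hjm := σ.inv_apply_lt_of_forall_lt_apply_eq hσfix hσm
    have hj : σ (σ⁻¹ m) = m := by simp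
    obtain ⟨rs, hrs⟩ := ih _ (by have := invCount_mul_cycleIcc_add_le hσfix hj hjm.le; omega)
      (σ * Fin.cycleIcc (σ⁻¹ m) m) rfl
    exact ⟨_, hrs.of_mul_cycleIcc hσfix hj hjm hS₁ hmax hjS⟩
  obtain ⟨S₁, hS₁, hmax⟩ := Finset.exists_max_image
    (Finset.univ.filter fun S : Finset (Fin n) => StrictMonoOn w S) Finset.card
    ⟨∅, by simp [StrictMonoOn]⟩
  simp only [Finset.mem_filter, Finset.mem_univ, true_and] at hS₁ hmax
  by_cases hjS : w⁻¹ m ∉ S₁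
  · exact step w hk hfix hm S₁ hS₁ hmax hjS
  -- Now `w⁻¹ m ∈ S₁`, and `w⁻¹ m < m` while `w (w⁻¹ m) = m > w m`, so `m ∉ S₁`: the step
  -- applies to `w⁻¹` with the increasing subsequence `S₁.image w`.
  have hjm := w.inv_apply_lt_of_forall_lt_apply_eq hfix hm
  have hmS : m ∉ S₁ := fun hmS => by
    have := hS₁ (not_not.mp hjS) hmS hjm
    simp only [Perm.coe_inv, apply_symm_apply] at this
    exact (w.apply_le_of_forall_lt_apply_eq hfix le_rfl).not_gt this
  have hfix' : ∀ i, m < i → w⁻¹ i = i := fun i hi => Perm.inv_eq_iff_eq.mpr (hfix i hi).symm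
  have hmax' (S : Finset (Fin n)) (hS : StrictMonoOn ⇑w⁻¹ S) : S.card ≤ (S₁.image w).card := by
    have : StrictMonoOn w ↑(S.image ⇑w⁻¹) := by simpa using hS.perm_inv_image
    rw [Finset.card_image_of_injective _ w.injective,
      ← Finset.card_image_of_injective _ w⁻¹.injective]
    exact hmax _ this
  obtain ⟨rs, hrs⟩ := step w⁻¹ (by rw [invCount_inv, hk]) hfix' hjm.ne (S₁.image w)
    (by simpa using hS₁.perm_inv_image) hmax' (by simpa using hmS)
  exact ⟨_, by simpa using hrs.inv⟩

end

theorem stmt4 (n : ℕ) (w : Equiv.Perm (Fin n)) :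
    sInf {k | ∃ rs : List (List ℕ), rs.length = k ∧ (∀ r ∈ rs, IsRun r) ∧
      IsWord n w rs.flatten} = runStat n w := by
  obtain ⟨rs₀, hruns₀, hword₀, hlen₀, hbound₀⟩ := exists_isTightRunFactorization w
  have hred₀ := isReducedWord_of_length_le_invCount hword₀ hlen₀
  refine le_antisymm ?_ ?_
  · refine csInf_le_csInf (OrderBot.bddBelow _) ⟨_, rs₀, rfl, hruns₀, hred₀⟩ ?_
    rintro k ⟨rs, hk, hruns, hred⟩
    exact ⟨rs, hk, hruns, hred.1⟩
  · refine le_csInf ⟨_, rs₀, rfl, hruns₀, hword₀⟩ ?_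
    rintro k ⟨rs, rfl, hruns, hv, hw⟩
    obtain ⟨S, hS, hcard⟩ := exists_strictMonoOn_card_add_length hruns hv
    have := hbound₀ S (hw ▸ hS)
    have hrun : runStat n w ≤ rs₀.length := Nat.sInf_le ⟨rs₀, rfl, hruns₀, hred₀⟩
    omega
end
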